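/- A maximum agreement graph of two unrooted binary phylogenetic trees has exactly one more agreement subgraph than disagreement edges: if it contains k disagreement edges then it contains k+1 agreement subgraphs, each of which is a tree. -/

import Mathlib

open Relation

/-- An undirected multigraph with finitely many vertices and edges, whose
vertices may carry labels (natural numbers, standing for the taxa in `X`).
Each edge `e` has two (possibly equal) endpoints `fst e` and `snd e`. -/
structure Multigraph : Type 1 where
  V : Type
  E : Type
  finV : Finite V
  finE : Finite E
  fst : E → V
  snd : E → V
  label : V → Option ℕ

attribute [instance] Multigraph.finV Multigraph.finE

namespace Multigraph

variable (G : Multigraph)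

/-- The degree of a vertex (loops count twice). -/
noncomputable def degree (v : G.V) : ℕ :=
  {e : G.E | G.fst e = v}.ncard + {e : G.E | G.snd e = v}.ncard

/-- A sprout: an unlabelled degree-one vertex. -/
def IsSprout (v : G.V) : Prop := G.label v = none ∧ G.degree v = 1

/-- A labelled isolated vertex (labelled singleton). -/
def IsLabelledIsolated (v : G.V) : Prop := (G.label v).isSome ∧ G.degree v = 0

def Adj (u v : G.V) : Prop :=
  ∃ e, (G.fst e = u ∧ G.snd e = v) ∨ (G.fst e = v ∧ G.snd e = u)

/-- Reachability by walks. -/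
def Reach : G.V → G.V → Prop := ReflTransGen G.Adj

def Connected : Prop := Nonempty G.V ∧ ∀ u v, G.Reach u v

/-- Delete a set of edges (keeping all vertices). -/
def deleteEdges (F : Set G.E) : Multigraph where
  V := G.V
  E := {e : G.E // e ∉ F}
  finV := G.finV
  finE := Subtype.finite
  fst := fun e => G.fst e.1
  snd := fun e => G.snd e.1
  label := G.label

/-- A cut-edge: deleting it disconnects two previously connected vertices. -/
def IsCutEdge (e : G.E) : Prop :=
  ∃ u v, G.Reach u v ∧ ¬ (G.deleteEdges {e}).Reach u v

/-- The reticulation number (cyclomatic number) of a graph, `|E| - (|V| - 1)`. -/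
noncomputable def tier : ℕ := Nat.card G.E - (Nat.card G.V - 1)

/-- Deleting the edge set `F` yields a spanning tree: the remaining graph is
connected and acyclic (every remaining edge is a cut-edge). -/
def YieldsSpanningTree (F : Set G.E) : Prop :=
  (G.deleteEdges F).Connected ∧ ∀ e, (G.deleteEdges F).IsCutEdge e

/-! ### Walks -/

/-- A dart: an edge together with a direction. -/
abbrev Dart := G.E × Bool

def dartSrc (d : G.Dart) : G.V := if d.2 then G.fst d.1 else G.snd d.1

def dartTgt (d : G.Dart) : G.V := if d.2 then G.snd d.1 else G.fst d.1

/-- `IsWalk u v l`: the list of darts `l` forms a walk from `u` to `v`. -/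
def IsWalk : G.V → G.V → List G.Dart → Prop
  | u, v, [] => u = v
  | u, v, d :: ds => G.dartSrc d = u ∧ IsWalk (G.dartTgt d) v ds

/-- The internal vertices of a walk. -/
def interiorVerts (l : List G.Dart) : List G.V :=
  (l.map G.dartTgt).dropLast

end Multigraph
namespace Multigraph

/-! ### Embeddings -/

/-- An embedding of a (possibly disconnected) graph `G` into `N`: every vertex of
`G` is mapped to a vertex of `N` and every edge of `G` is mapped to a nonempty
trail of `N` between the images of its endpoints; distinct edges of `G` use
pairwise disjoint sets of edges of `N` (so the components of `G` are mapped to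
subdivisions lying in pairwise edge-disjoint subgraphs of `N`), and labels are
preserved. -/
structure Emb (G N : Multigraph) where
  vMap : G.V → N.V
  path : G.E → List N.Dart
  walk_ok : ∀ e, N.IsWalk (vMap (G.fst e)) (vMap (G.snd e)) (path e)
  path_ne : ∀ e, path e ≠ []
  nodup : ∀ e, (path e).Nodup
  edge_inj : ∀ e e' : G.E, ∀ d ∈ path e, ∀ d' ∈ path e', d.1 = d'.1 → e = e' ∧ d = d'
  interior_nodup : ∀ e, (N.interiorVerts (path e)).Nodup
  interior_disj : ∀ e e', e ≠ e' → ∀ w ∈ N.interiorVerts (path e), w ∉ N.interiorVerts (path e')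
  label_ok : ∀ v i, G.label v = some i → N.label (vMap v) = some i

/-- A plain embedding, witnessing that `N` displays `G`: additionally the vertex
map is injective and the subdivision vertices (interior vertices of the paths)
are fresh. -/
structure PlainEmb (G N : Multigraph) extends Emb G N where
  vMap_inj : Function.Injective vMap
  interior_fresh : ∀ e, ∀ w ∈ N.interiorVerts (path e), ∀ v, vMap v ≠ w

/-- `N` displays `G`: a subdivision of `G` is a subgraph of `N`. -/
def Displays (N G : Multigraph) : Prop := Nonempty (PlainEmb G N)

/-- An agreement embedding of `G` into `N`: an embedding such that
(i) all edges of `N` are covered,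
(ii) at most two vertices of `G` are mapped to the same vertex of `N`, and if two
distinct vertices share an image, one of them is a sprout and the other a
labelled isolated vertex,
(iii) every labelled vertex of `N` is the image of exactly one vertex of `G`,
which carries the same label, and
(iv) only sprouts may be mapped onto interior (subdivision) vertices of paths. -/
structure AgrEmb (G N : Multigraph) extends Emb G N where
  covers : ∀ f : N.E, ∃ e, ∃ d ∈ path e, d.1 = f
  two_to_one : ∀ u v, u ≠ v → vMap u = vMap v →
    (G.IsSprout u ∧ G.IsLabelledIsolated v) ∨ (G.IsSprout v ∧ G.IsLabelledIsolated u)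
  at_most_two : ∀ u v w, u ≠ v → v ≠ w → u ≠ w →
    ¬ (vMap u = vMap v ∧ vMap v = vMap w)
  labels_unique : ∀ x : N.V, ∀ i, N.label x = some i →
    ∃! v : G.V, G.label v = some i ∧ vMap v = x
  interior_fresh : ∀ e, ∀ w ∈ N.interiorVerts (path e), ∀ v, ¬ G.IsSprout v → vMap v ≠ w

/-! ### Isomorphisms -/

/-- A label-preserving isomorphism of multigraphs. -/
structure Iso (G H : Multigraph) where
  vEquiv : G.V ≃ H.V
  eEquiv : G.E ≃ H.E
  ends_ok : ∀ e,
    (H.fst (eEquiv e) = vEquiv (G.fst e) ∧ H.snd (eEquiv e) = vEquiv (G.snd e)) ∨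
    (H.fst (eEquiv e) = vEquiv (G.snd e) ∧ H.snd (eEquiv e) = vEquiv (G.fst e))
  label_ok : ∀ v, H.label (vEquiv v) = G.label v

/-! ### Components -/

variable (G : Multigraph)

/-- The connected components of `G`. -/
def Comp : Type := Quot G.Adj

/-- The component of a vertex. -/
def comp (v : G.V) : G.Comp := Quot.mk _ v

def CompHasSprout (c : G.Comp) : Prop := ∃ v, G.comp v = c ∧ G.IsSprout v

/-- The number of components that contain no sprout (agreement subgraphs). -/
noncomputable def agreementCompCount : ℕ := {c : G.Comp | ¬ G.CompHasSprout c}.ncard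

/-- A disagreement edge: a single edge both of whose endpoints are sprouts
(hence its component consists of this edge alone, on two unlabelled vertices). -/
def IsDisEdge (e : G.E) : Prop := G.IsSprout (G.fst e) ∧ G.IsSprout (G.snd e)

noncomputable def disEdgeCount : ℕ := {e : G.E | G.IsDisEdge e}.ncard

noncomputable def sproutCount : ℕ := {v : G.V | G.IsSprout v}.ncard

def IsSproutFree : Prop := ∀ v, ¬ G.IsSprout v

/-- The subgraph of a component `c` of `G`. -/
def compSubgraph (c : G.Comp) : Multigraph where
  V := {v : G.V // G.comp v = c}
  E := {e : G.E // G.comp (G.fst e) = c}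
  finV := Subtype.finite
  finE := Subtype.finite
  fst := fun e => ⟨G.fst e.1, e.2⟩
  snd := fun e => ⟨G.snd e.1, by
    have : G.comp (G.fst e.1) = G.comp (G.snd e.1) := Quot.sound ⟨e.1, Or.inl ⟨rfl, rfl⟩⟩
    rw [← this]; exact e.2⟩
  label := fun v => G.label v.1

/-- A (connected multigraph that is a) tree: connected and every edge is a cut-edge. -/
def IsTreeGraph : Prop := G.Connected ∧ ∀ e, G.IsCutEdge e

/-- Delete a set of disagreement edges together with their endpoints. -/
def deleteDisEdges (A : Set G.E) : Multigraph where
  V := {v : G.V // ∀ e ∈ A, G.fst e ≠ v ∧ G.snd e ≠ v}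
  E := {e : G.E // e ∉ A ∧ ∀ e' ∈ A,
    (G.fst e' ≠ G.fst e ∧ G.snd e' ≠ G.fst e) ∧ (G.fst e' ≠ G.snd e ∧ G.snd e' ≠ G.snd e)}
  finV := Subtype.finite
  finE := Subtype.finite
  fst := fun e => ⟨G.fst e.1, fun e' he' => (e.2.2 e' he').1⟩
  snd := fun e => ⟨G.snd e.1, fun e' he' => (e.2.2 e' he').2⟩
  label := fun v => G.label v.1

end Multigraph
namespace Multigraph

variable (G : Multigraph)

/-! ### Phylogenetic networks -/

/-- The labels of `G` are exactly `{0, …, n-1}`, bijectively placed on the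
vertices satisfying `P` (e.g. the leaves). -/
def LabelsExactly (n : ℕ) (P : G.V → Prop) : Prop :=
  (∀ v, (G.label v).isSome ↔ P v) ∧
  (∀ v i, G.label v = some i → i < n) ∧
  (∀ i, i < n → ∃! v, G.label v = some i)

/-- Properness: every cut-edge separates two labelled leaves, i.e. lies on a
path connecting two labelled vertices. -/
def IsProper : Prop :=
  ∀ e, G.IsCutEdge e →
    (∃ u, (G.deleteEdges {e}).Reach (G.fst e) u ∧ (G.label u).isSome) ∧
    (∃ u, (G.deleteEdges {e}).Reach (G.snd e) u ∧ (G.label u).isSome)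

/-- An unrooted binary proper phylogenetic network on `X = {0, …, n-1}`:
a connected multigraph whose leaves are bijectively labelled with `X`, all of
whose non-leaf vertices have degree three, and which is proper. -/
def IsPhyloNet (n : ℕ) : Prop :=
  G.Connected ∧ (∀ v, G.degree v = 1 ∨ G.degree v = 3) ∧
    G.LabelsExactly n (fun v => G.degree v = 1) ∧ G.IsProper

/-- An unrooted binary phylogenetic tree on `X = {0, …, n-1}`. -/
def IsPhyloTree (n : ℕ) : Prop := G.IsPhyloNet n ∧ G.IsTreeGraph

/-- A replug network on `X = {0, …, n-1}`: leaves and labelled singletons are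
bijectively labelled with `X`, all non-leaf vertices have degree three; it may
be disconnected, improper, or contain loops. -/
def IsReplugNet (n : ℕ) : Prop :=
  (∀ v, G.degree v ≤ 1 ∨ G.degree v = 3) ∧ G.LabelsExactly n (fun v => G.degree v ≤ 1)

/-! ### Rearrangement operations -/

/-- `G` together with one extra disjoint edge on two new unlabelled vertices. -/
def addDisEdge : Multigraph where
  V := G.V ⊕ Bool
  E := G.E ⊕ Unit
  finV := inferInstance
  finE := inferInstance
  fst := fun e => match e with | .inl e => .inl (G.fst e) | .inr _ => .inr true
  snd := fun e => match e with | .inl e => .inl (G.snd e) | .inr _ => .inr false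
  label := fun v => match v with | .inl v => G.label v | .inr _ => none

/-- `N` is obtained from `S` by adding a single new edge (whose endpoints
subdivide edges of `S` or are attached to labelled singletons of `S`): the graph
`S` plus one disagreement edge has an agreement embedding into `N` in which the
new edge is mapped to a single edge of `N`. -/
def AddsEdge (S N : Multigraph) : Prop :=
  ∃ h : AgrEmb S.addDisEdge N, (h.path (Sum.inr ())).length = 1

/-- A TBR⁰ operation: `N'` is obtained from `N` by removing an edge and
reconnecting (both networks are a common sprout-free graph `S` plus one edge). -/
def TBR0 (N N' : Multigraph) : Prop :=
  ∃ S : Multigraph, S.IsSproutFree ∧ AddsEdge S N ∧ AddsEdge S N'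

/-- A TBR⁺ operation adds an edge. -/
def TBRplus (N N' : Multigraph) : Prop := AddsEdge N N'

/-- A TBR⁻ operation removes an edge. -/
def TBRminus (N N' : Multigraph) : Prop := AddsEdge N' N

def TBRStep (N N' : Multigraph) : Prop := TBR0 N N' ∨ TBRplus N N' ∨ TBRminus N N'

/-- `N` is obtained from `S` (a graph with sprouts) by regrafting each sprout:
an agreement embedding in which each pendant edge of a sprout is mapped to a
single edge of `N`. -/
def RegraftsInto (S N : Multigraph) : Prop :=
  ∃ h : AgrEmb S N, ∀ e, (S.IsSprout (S.fst e) ∨ S.IsSprout (S.snd e)) →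
    (h.path e).length = 1

/-- A PR⁰ operation: `N'` is obtained from `N` by pruning an edge at one
endpoint and regrafting it (both networks are a common graph `S` with exactly
one sprout, with the sprout regrafted). -/
def PR0 (N N' : Multigraph) : Prop :=
  ∃ S : Multigraph, (∃! v, S.IsSprout v) ∧ RegraftsInto S N ∧ RegraftsInto S N'

def PRStep (N N' : Multigraph) : Prop := PR0 N N' ∨ TBRplus N N' ∨ TBRminus N N'

/-- A replug operation is graph-theoretically a PR operation, performed in the
larger space of replug networks. -/
def ReplugStep (N N' : Multigraph) : Prop := PRStep N N'

/-! ### Distances -/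

/-- `Chain P R k N N'`: a length-`k` sequence of `R`-steps from `N` to `N'`
all of whose members belong to the class `P`. -/
def Chain (P : Multigraph → Prop) (R : Multigraph → Multigraph → Prop) :
    ℕ → Multigraph → Multigraph → Prop
  | 0, N, N' => Nonempty (Iso N N')
  | k + 1, N, N' => ∃ M, P M ∧ R N M ∧ Chain P R k M N'

/-- The distance induced by steps `R` within the class `P`. -/
noncomputable def classDist (P : Multigraph → Prop)
    (R : Multigraph → Multigraph → Prop) (N N' : Multigraph) : ℕ :=
  sInf {k | Chain P R k N N'}

/-- The TBR-distance on unrooted binary proper phylogenetic networks on `X`. -/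
noncomputable def dTBR (n : ℕ) (N N' : Multigraph) : ℕ :=
  classDist (fun M => M.IsPhyloNet n) TBRStep N N'

/-- The PR-distance on unrooted binary proper phylogenetic networks on `X`. -/
noncomputable def dPR (n : ℕ) (N N' : Multigraph) : ℕ :=
  classDist (fun M => M.IsPhyloNet n) PRStep N N'

/-- The replug distance: distance under replug operations in the space of
replug networks. -/
noncomputable def dReplug (n : ℕ) (N N' : Multigraph) : ℕ :=
  classDist (fun M => M.IsReplugNet n) ReplugStep N N'

/-! ### Agreement graphs -/

/-- `G` is an agreement graph of `N` and `N'` (in tiers `r ≤ r'`, `l = r' - r`):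
every component of `G` is either sprout-free (an agreement subgraph) or a single
disagreement edge; `G` without `l` of its disagreement edges has an agreement
embedding into the lower-tier network, and `G` has an agreement embedding into
the higher-tier network.  (Stated symmetrically in `N` and `N'`.) -/
def IsAgreementGraph (N N' : Multigraph) : Prop :=
  (∀ v, G.IsSprout v → ∃ e, G.IsDisEdge e ∧ (G.fst e = v ∨ G.snd e = v)) ∧
  ∃ A A' : Set G.E,
    (∀ e ∈ A, G.IsDisEdge e) ∧ (∀ e ∈ A', G.IsDisEdge e) ∧
    A.ncard = N'.tier - N.tier ∧ A'.ncard = N.tier - N'.tier ∧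
    Nonempty (AgrEmb (G.deleteDisEdges A) N) ∧
    Nonempty (AgrEmb (G.deleteDisEdges A') N')

/-- A maximum agreement graph: an agreement graph with a minimal number of
disagreement edges. -/
def IsMAG (N N' : Multigraph) : Prop :=
  G.IsAgreementGraph N N' ∧
  ∀ G' : Multigraph, G'.IsAgreementGraph N N' → G.disEdgeCount ≤ G'.disEdgeCount

/-- The agreement distance: the number of disagreement edges of a maximum
agreement graph. -/
noncomputable def dAD (N N' : Multigraph) : ℕ :=
  sInf {k | ∃ G : Multigraph, G.IsAgreementGraph N N' ∧ G.disEdgeCount = k}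

/-! ### Endpoint agreement graphs -/

/-- `IsEAGWitness H D N N'`: `H` together with the designated set `D` of
disagreement edges (isolated single-edge components on two sprouts, as many as
the tier difference) is an endpoint agreement graph of `N` and `N'`: `H` minus
the disagreement edges has an agreement embedding into the lower-tier network
and `H` has one into the higher-tier network.  Unlike for agreement graphs, the
remaining components (the endpoint agreement subgraphs) may contain sprouts. -/
def IsEAGWitness (H : Multigraph) (D : Set H.E) (N N' : Multigraph) : Prop :=
  (∀ e ∈ D, H.IsDisEdge e) ∧
  D.ncard = (N'.tier - N.tier) + (N.tier - N'.tier) ∧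
  (N.tier ≤ N'.tier →
    Nonempty (AgrEmb (H.deleteDisEdges D) N) ∧ Nonempty (AgrEmb H N')) ∧
  (N'.tier ≤ N.tier →
    Nonempty (AgrEmb H N) ∧ Nonempty (AgrEmb (H.deleteDisEdges D) N'))

/-- The cost `s + l` of an endpoint agreement graph: the number `s` of sprouts
lying in agreement subgraphs plus the number `l` of disagreement edges. -/
noncomputable def EAGcost (H : Multigraph) (D : Set H.E) : ℕ :=
  {v : H.V | H.IsSprout v ∧ ∀ e ∈ D, H.fst e ≠ v ∧ H.snd e ≠ v}.ncard + D.ncard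

/-- A maximum endpoint agreement graph: an endpoint agreement graph with a
minimal number of sprouts. -/
def IsMEAG (H : Multigraph) (D : Set H.E) (N N' : Multigraph) : Prop :=
  H.IsEAGWitness D N N' ∧
  ∀ (H' : Multigraph) (D' : Set H'.E), H'.IsEAGWitness D' N N' →
    H.sproutCount ≤ H'.sproutCount

/-- The endpoint agreement distance `s + l`. -/
noncomputable def dEAD (N N' : Multigraph) : ℕ :=
  sInf {c | ∃ (H : Multigraph) (D : Set H.E), H.IsEAGWitness D N N' ∧ H.EAGcost D = c}

end Multigraph

/-! ### Auxiliary development -/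

namespace Multigraph

variable {G : Multigraph}

lemma adj_symm {u v : G.V} (h : G.Adj u v) : G.Adj v u := by
  obtain ⟨e, h | h⟩ := h
  · exact ⟨e, Or.inr h⟩
  · exact ⟨e, Or.inl h⟩

lemma reach_symm {u v : G.V} (h : G.Reach u v) : G.Reach v u := by
  induction h with
  | refl => exact ReflTransGen.refl
  | tail _ hbc ih => exact ReflTransGen.head (adj_symm hbc) ih

lemma reach_of_eqvGen {u v : G.V} (h : EqvGen G.Adj u v) : G.Reach u v := by
  induction h with
  | rel _ _ h => exact ReflTransGen.single h
  | refl => exact ReflTransGen.refl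
  | symm _ _ _ ih => exact reach_symm ih
  | trans _ _ _ _ _ ih1 ih2 => exact ih1.trans ih2

lemma comp_eq_iff_reach {u v : G.V} : G.comp u = G.comp v ↔ G.Reach u v := by
  constructor
  · intro h
    exact reach_of_eqvGen (Quot.eq.1 h)
  · intro h
    induction h with
    | refl => rfl
    | tail _ h ih => exact ih.trans (Quot.sound h)

instance : Finite G.Comp :=
  Finite.of_surjective (Quot.mk G.Adj) (fun c => Quot.exists_rep c)

lemma reach_map {G H : Multigraph} (f : G.V → H.V)
    (hadj : ∀ u v, G.Adj u v → H.Reach (f u) (f v)) {u v : G.V} (h : G.Reach u v) :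
    H.Reach (f u) (f v) := by
  induction h with
  | refl => exact ReflTransGen.refl
  | tail _ h ih => exact ih.trans (hadj _ _ h)

/-! #### Walks -/

lemma isWalk_nil_iff {u v : G.V} : G.IsWalk u v [] ↔ u = v := Iff.rfl

lemma isWalk_cons_iff {u v : G.V} {d : G.Dart} {ds : List G.Dart} :
    G.IsWalk u v (d :: ds) ↔ G.dartSrc d = u ∧ G.IsWalk (G.dartTgt d) v ds := Iff.rfl

@[simp] lemma interiorVerts_nil : G.interiorVerts [] = [] := rfl

@[simp] lemma interiorVerts_single (d : G.Dart) : G.interiorVerts [d] = [] := rfl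

lemma interiorVerts_cons (d : G.Dart) {ds : List G.Dart} (h : ds ≠ []) :
    G.interiorVerts (d :: ds) = G.dartTgt d :: G.interiorVerts ds := by
  cases ds with
  | nil => exact absurd rfl h
  | cons d' ds' => rfl

lemma isWalk_getLast {u v : G.V} {l : List G.Dart} (h : G.IsWalk u v l) (hne : l ≠ []) :
    G.dartTgt (l.getLast hne) = v := by
  induction l generalizing u with
  | nil => exact absurd rfl hne
  | cons d ds ih =>
    cases ds with
    | nil => exact h.2
    | cons d' ds' =>
      rw [List.getLast_cons (by simp)]
      exact ih h.2 (by simp)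

lemma src_mem_interior {u v : G.V} {d₀ : G.Dart} {ds : List G.Dart}
    (h : G.IsWalk u v (d₀ :: ds)) : ∀ d ∈ ds, G.dartSrc d ∈ G.interiorVerts (d₀ :: ds) := by
  induction ds generalizing d₀ u with
  | nil => intro d hd; simp at hd
  | cons d₁ ds' ih =>
    intro d hd
    rw [interiorVerts_cons _ (by simp)]
    rcases List.mem_cons.1 hd with rfl | hd
    · have hsrc : G.dartSrc d = G.dartTgt d₀ := h.2.1
      rw [hsrc]; exact List.mem_cons_self
    · exact List.mem_cons_of_mem _ (ih h.2 d hd)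

lemma tgt_mem_interior {u v : G.V} {l : List G.Dart} (h : G.IsWalk u v l)
    (hne : l ≠ []) : ∀ d ∈ l, d ≠ l.getLast hne → G.dartTgt d ∈ G.interiorVerts l := by
  induction l generalizing u with
  | nil => exact absurd rfl hne
  | cons d₀ ds ih =>
    intro d hd hlast
    cases ds with
    | nil =>
      rcases List.mem_cons.1 hd with rfl | hd
      · exact absurd rfl hlast
      · simp at hd
    | cons d₁ ds' =>
      rw [interiorVerts_cons _ (by simp)]
      rcases List.mem_cons.1 hd with rfl | hd
      · exact List.mem_cons_self
      · refine List.mem_cons_of_mem _ (ih h.2 (by simp) d hd ?_)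
        intro hcon
        apply hlast
        rw [List.getLast_cons (by simp : (d₁ :: ds') ≠ [])]
        exact hcon

lemma reach_deleteEdges_of_walk {F : Set G.E} {u v : G.V} {l : List G.Dart}
    (h : G.IsWalk u v l) (hF : ∀ d ∈ l, d.1 ∉ F) : (G.deleteEdges F).Reach u v := by
  induction l generalizing u with
  | nil => exact h ▸ ReflTransGen.refl
  | cons d ds ih =>
    refine ReflTransGen.head ?_ (ih h.2 (fun d' hd' => hF d' (List.mem_cons_of_mem _ hd')))
    have hd1 : d.1 ∉ F := hF d (List.mem_cons_self)
    have hsrc := h.1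
    obtain ⟨f, b⟩ := d
    cases b with
    | false =>
      exact ⟨⟨f, hd1⟩, Or.inr ⟨rfl, hsrc⟩⟩
    | true =>
      exact ⟨⟨f, hd1⟩, Or.inl ⟨hsrc, rfl⟩⟩

/-! #### Cut edges -/

lemma reach_cases_delete (e : G.E) {u v : G.V} (h : G.Reach u v) :
    (G.deleteEdges {e}).Reach u v ∨
    ((G.deleteEdges {e}).Reach u (G.fst e) ∧ (G.deleteEdges {e}).Reach (G.snd e) v) ∨
    ((G.deleteEdges {e}).Reach u (G.snd e) ∧ (G.deleteEdges {e}).Reach (G.fst e) v) := by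
  induction h using ReflTransGen.head_induction_on with
  | refl => exact Or.inl ReflTransGen.refl
  | head hadj _ ih =>
    obtain ⟨g, hg | hg⟩ := hadj
    · by_cases hge : g = e
      · subst hge
        obtain ⟨h1, h2⟩ := hg
        subst h1; subst h2
        rcases ih with h | ⟨h1, h2⟩ | ⟨h1, h2⟩
        · exact Or.inr (Or.inl ⟨ReflTransGen.refl, h⟩)
        · exact Or.inl ((reach_symm h1).trans h2)
        · exact Or.inl h2
      · have hadj' : (G.deleteEdges {e}).Adj (G.fst g) (G.snd g) :=
          ⟨⟨g, by simpa using hge⟩, Or.inl ⟨rfl, rfl⟩⟩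
        obtain ⟨h1, h2⟩ := hg
        subst h1; subst h2
        rcases ih with h | ⟨h1, h2⟩ | ⟨h1, h2⟩
        · exact Or.inl (ReflTransGen.head hadj' h)
        · exact Or.inr (Or.inl ⟨ReflTransGen.head hadj' h1, h2⟩)
        · exact Or.inr (Or.inr ⟨ReflTransGen.head hadj' h1, h2⟩)
    · by_cases hge : g = e
      · subst hge
        obtain ⟨h1, h2⟩ := hg
        subst h1; subst h2
        rcases ih with h | ⟨h1, h2⟩ | ⟨h1, h2⟩
        · exact Or.inr (Or.inr ⟨ReflTransGen.refl, h⟩)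
        · exact Or.inl h2
        · exact Or.inl ((reach_symm h1).trans h2)
      · have hadj' : (G.deleteEdges {e}).Adj (G.snd g) (G.fst g) :=
          ⟨⟨g, by simpa using hge⟩, Or.inr ⟨rfl, rfl⟩⟩
        obtain ⟨h1, h2⟩ := hg
        subst h1; subst h2
        rcases ih with h | ⟨h1, h2⟩ | ⟨h1, h2⟩
        · exact Or.inl (ReflTransGen.head hadj' h)
        · exact Or.inr (Or.inl ⟨ReflTransGen.head hadj' h1, h2⟩)
        · exact Or.inr (Or.inr ⟨ReflTransGen.head hadj' h1, h2⟩)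

lemma isCutEdge_not_reach {e : G.E} (h : G.IsCutEdge e) :
    ¬ (G.deleteEdges {e}).Reach (G.fst e) (G.snd e) := by
  intro hr
  obtain ⟨u, v, huv, hnuv⟩ := h
  apply hnuv
  rcases reach_cases_delete e huv with h | ⟨h1, h2⟩ | ⟨h1, h2⟩
  · exact h
  · exact (h1.trans hr).trans h2
  · exact (h1.trans (reach_symm hr)).trans h2

end Multigraph

namespace Multigraph

variable {G : Multigraph}

lemma nat_card_ne {α : Type*} [Finite α] (a : α) :
    Nat.card {x : α // x ≠ a} + 1 = Nat.card α := by
  classical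
  cases nonempty_fintype α
  have h1 : Fintype.card {x : α // ¬ (x = a)} = Fintype.card α - Fintype.card {x : α // x = a} :=
    Fintype.card_subtype_compl _
  have h2 : Fintype.card {x : α // x = a} = 1 := Fintype.card_subtype_eq a
  have h3 : 0 < Fintype.card α := Fintype.card_pos_iff.2 ⟨a⟩
  rw [Nat.card_eq_fintype_card, Nat.card_eq_fintype_card]
  have : Fintype.card {x : α // x ≠ a} = Fintype.card {x : α // ¬ (x = a)} := rfl
  omega

lemma adj_of_deleteEdges {F : Set G.E} {u v : G.V} (h : (G.deleteEdges F).Adj u v) :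
    G.Adj u v := by
  obtain ⟨g, hg⟩ := h
  exact ⟨g.1, hg⟩

lemma card_comp_deleteEdges (e : G.E) (hcut : G.IsCutEdge e) :
    Nat.card (G.deleteEdges {e}).Comp = Nat.card G.Comp + 1 := by
  set G' := G.deleteEdges {e} with hG'
  have hVeq : G'.V = G.V := rfl
  -- the projection map on components
  let φ : G'.Comp → G.Comp := Quot.lift (fun v : G.V => G.comp v)
    (fun x y h => Quot.sound (adj_of_deleteEdges h))
  have hφ : ∀ v : G.V, φ (G'.comp v) = G.comp v := fun v => rfl
  set c₂ : G'.Comp := G'.comp (G.snd e) with hc₂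
  have hc₁₂ : G'.comp (G.fst e) ≠ c₂ := by
    intro hcc
    exact isCutEdge_not_reach hcut (comp_eq_iff_reach.1 hcc)
  let ψ : {c : G'.Comp // c ≠ c₂} → G.Comp := fun c => φ c.1
  have hbij : Function.Bijective ψ := by
    constructor
    · rintro ⟨c, hc⟩ ⟨d, hd⟩ hcd
      obtain ⟨u, rfl⟩ := Quot.exists_rep c
      obtain ⟨w, rfl⟩ := Quot.exists_rep d
      have : G.comp u = G.comp w := hcd
      rcases reach_cases_delete e (comp_eq_iff_reach.1 this) with h | ⟨h1, h2⟩ | ⟨h1, h2⟩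
      · exact Subtype.ext (comp_eq_iff_reach.2 h)
      · exact absurd (comp_eq_iff_reach.2 (reach_symm h2)) hd
      · exact absurd (comp_eq_iff_reach.2 h1) hc
    · intro x
      obtain ⟨u, rfl⟩ := Quot.exists_rep x
      by_cases hu : G'.comp u = c₂
      · refine ⟨⟨G'.comp (G.fst e), hc₁₂⟩, ?_⟩
        show G.comp (G.fst e) = G.comp u
        have h1 : G.comp (G.fst e) = G.comp (G.snd e) := Quot.sound ⟨e, Or.inl ⟨rfl, rfl⟩⟩
        have h2 : G.comp (G.snd e) = G.comp u := by
          have : φ c₂ = φ (G'.comp u) := by rw [hu]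
          exact this
        exact h1.trans h2
      · exact ⟨⟨G'.comp u, hu⟩, rfl⟩
  have := Nat.card_eq_of_bijective ψ hbij
  rw [← this, nat_card_ne]

lemma euler : ∀ (G : Multigraph), (∀ e, G.IsCutEdge e) →
    Nat.card G.V = Nat.card G.E + Nat.card G.Comp := by
  suffices h : ∀ (n : ℕ) (G : Multigraph), Nat.card G.E = n → (∀ e, G.IsCutEdge e) →
      Nat.card G.V = Nat.card G.E + Nat.card G.Comp by
    intro G hcut; exact h (Nat.card G.E) G rfl hcut
  intro n
  induction n with
  | zero =>
    intro G hE _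
    have hempty : IsEmpty G.E := by
      by_contra hne
      rw [not_isEmpty_iff] at hne
      have := Nat.card_pos_iff.2 ⟨hne, inferInstance⟩
      omega
    have hinj : Function.Injective G.comp := by
      intro a b hab
      have hr : G.Reach a b := reach_of_eqvGen (Quot.eq.1 hab)
      induction hr with
      | refl => rfl
      | tail _ h _ => exact absurd h (by rintro ⟨g, -⟩; exact hempty.elim g)
    have hsurj : Function.Surjective G.comp := fun c => Quot.exists_rep c
    have := Nat.card_eq_of_bijective G.comp ⟨hinj, hsurj⟩
    rw [hE]
    omega
  | succ n ih =>
    intro G hE hcut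
    have hpos : 0 < Nat.card G.E := by omega
    have hne : Nonempty G.E := (Nat.card_pos_iff.1 hpos).1
    obtain ⟨e⟩ := hne
    set G' := G.deleteEdges {e} with hG'
    have hE' : Nat.card G'.E = n := by
      have hequiv : Nat.card G'.E = Nat.card {e' : G.E // e' ≠ e} :=
        Nat.card_congr (Equiv.subtypeEquivRight (fun x => by simp))
      have := nat_card_ne e
      omega
    have hcut' : ∀ f : G'.E, G'.IsCutEdge f := by
      intro f
      refine ⟨G'.fst f, G'.snd f, ReflTransGen.single ⟨f, Or.inl ⟨rfl, rfl⟩⟩, ?_⟩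
      intro hre
      have hmap : (G.deleteEdges {f.1}).Reach (G.fst f.1) (G.snd f.1) := by
        refine reach_map (G := G'.deleteEdges {f}) (H := G.deleteEdges {f.1}) id ?_ hre
        intro u v hadj
        obtain ⟨g, hg⟩ := hadj
        refine ReflTransGen.single ⟨⟨g.1.1, ?_⟩, hg⟩
        intro hmem
        exact g.2 (show g.1 = f from Subtype.ext (Set.mem_singleton_iff.1 hmem))
      exact isCutEdge_not_reach (hcut f.1) hmap
    have hcomp : Nat.card G'.Comp = Nat.card G.Comp + 1 := card_comp_deleteEdges e (hcut e)
    have hV : Nat.card G'.V = Nat.card G.V := rfl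
    have := ih G' hE' hcut'
    omega

lemma connected_card_comp (h : G.Connected) : Nat.card G.Comp = 1 := by
  have h1 : Subsingleton G.Comp := ⟨fun c d => by
    obtain ⟨u, rfl⟩ := Quot.exists_rep c
    obtain ⟨v, rfl⟩ := Quot.exists_rep d
    exact comp_eq_iff_reach.2 (h.2 u v)⟩
  have h2 : Nonempty G.Comp := Nonempty.map (Quot.mk _) h.1
  exact Nat.card_eq_one_iff_unique.2 ⟨h1, h2⟩

end Multigraph

namespace Multigraph

variable {G : Multigraph}

/-! #### Acyclicity via an agreement embedding into a tree -/

lemma allCut_of_agrEmb {G T : Multigraph} (h : AgrEmb G T) (hT : ∀ f, T.IsCutEdge f) :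
    ∀ e : G.E, G.IsCutEdge e := by
  intro e
  refine ⟨G.fst e, G.snd e, ReflTransGen.single ⟨e, Or.inl ⟨rfl, rfl⟩⟩, ?_⟩
  intro hre
  obtain ⟨d₀, ds, hpath⟩ : ∃ d₀ ds, h.path e = d₀ :: ds := by
    cases hp : h.path e with
    | nil => exact absurd hp (h.path_ne e)
    | cons a l => exact ⟨a, l, rfl⟩
  have hwalk := h.walk_ok e
  rw [hpath] at hwalk
  have hsrc : T.dartSrc d₀ = h.vMap (G.fst e) := hwalk.1
  have htail : T.IsWalk (T.dartTgt d₀) (h.vMap (G.snd e)) ds := hwalk.2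
  have hd₀mem : d₀ ∈ h.path e := by rw [hpath]; exact List.mem_cons_self
  have havoid : ∀ d ∈ ds, d.1 ∉ ({d₀.1} : Set T.E) := by
    intro d hd hmem
    have heq := h.edge_inj e e d (by rw [hpath]; exact List.mem_cons_of_mem _ hd) d₀ hd₀mem
      (Set.mem_singleton_iff.1 hmem)
    have hnodup := h.nodup e
    rw [hpath, List.nodup_cons] at hnodup
    exact hnodup.1 (heq.2 ▸ hd)
  have h1 : (T.deleteEdges {d₀.1}).Reach (T.dartTgt d₀) (h.vMap (G.snd e)) :=
    reach_deleteEdges_of_walk htail havoid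
  have h2 : (T.deleteEdges {d₀.1}).Reach (h.vMap (G.fst e)) (h.vMap (G.snd e)) := by
    refine reach_map (G := G.deleteEdges {e}) (H := T.deleteEdges {d₀.1}) h.vMap ?_ hre
    intro u v hadj
    obtain ⟨g, hg⟩ := hadj
    have hg1 : g.1 ≠ e := fun hh => g.2 (by simp [hh])
    have havoidg : ∀ d ∈ h.path g.1, d.1 ∉ ({d₀.1} : Set T.E) := by
      intro d hd hmem
      exact hg1 (h.edge_inj g.1 e d hd d₀ hd₀mem (Set.mem_singleton_iff.1 hmem)).1
    have hw := reach_deleteEdges_of_walk (h.walk_ok g.1) havoidg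
    rcases hg with ⟨rfl, rfl⟩ | ⟨rfl, rfl⟩
    · exact hw
    · exact reach_symm hw
  have h3 : (T.deleteEdges {d₀.1}).Reach (T.dartSrc d₀) (T.dartTgt d₀) := by
    rw [hsrc]
    exact h2.trans (reach_symm h1)
  obtain ⟨g, b⟩ := d₀
  cases b with
  | true => exact isCutEdge_not_reach (hT g) h3
  | false => exact isCutEdge_not_reach (hT g) (reach_symm h3)

/-! #### Degree-one vertices -/

lemma unique_incident {v : G.V} (hv : G.degree v = 1) {g g' : G.E}
    (hg : G.fst g = v ∨ G.snd g = v) (hg' : G.fst g' = v ∨ G.snd g' = v) : g = g' := by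
  have hle : ({e : G.E | G.fst e = v} ∪ {e : G.E | G.snd e = v}).ncard ≤ 1 := by
    refine le_trans (Set.ncard_union_le _ _) ?_
    have := hv
    unfold degree at this
    omega
  exact (Set.ncard_le_one (Set.toFinite _)).1 hle g (by rcases hg with h | h; exacts [Or.inl h, Or.inr h])
    g' (by rcases hg' with h | h; exacts [Or.inl h, Or.inr h])

lemma no_loop_of_degree_one {v : G.V} (hv : G.degree v = 1) {g : G.E}
    (h1 : G.fst g = v) (h2 : G.snd g = v) : False := by
  have ha : 0 < {e : G.E | G.fst e = v}.ncard := (Set.ncard_pos (Set.toFinite _)).2 ⟨g, h1⟩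
  have hb : 0 < {e : G.E | G.snd e = v}.ncard := (Set.ncard_pos (Set.toFinite _)).2 ⟨g, h2⟩
  have := hv
  unfold degree at this
  omega

lemma disedge_reach {e : G.E} (he : G.IsDisEdge e) {v w : G.V}
    (hr : G.Reach v w) (hv : v = G.fst e ∨ v = G.snd e) : w = G.fst e ∨ w = G.snd e := by
  induction hr with
  | refl => exact hv
  | @tail b w _ hadj ih =>
    have hb := ih
    obtain ⟨g, hg⟩ := hadj
    have hdeg : G.degree b = 1 := by
      rcases hb with h | h
      · rw [h]; exact he.1.2
      · rw [h]; exact he.2.2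
    have hebinc : G.fst e = b ∨ G.snd e = b := by
      rcases hb with h | h
      · exact Or.inl h.symm
      · exact Or.inr h.symm
    rcases hg with ⟨h1, h2⟩ | ⟨h1, h2⟩
    · have hge : g = e := unique_incident hdeg (Or.inl h1) hebinc
      exact Or.inr (by rw [← h2, hge])
    · have hge : g = e := unique_incident hdeg (Or.inr h2) hebinc
      exact Or.inl (by rw [← h1, hge])

end Multigraph

namespace Multigraph

variable {G : Multigraph}

lemma reach_lift_comp {c : G.Comp} (v : (G.compSubgraph c).V) {u : G.V}
    (hu : G.comp u = c) (hr : G.Reach u v.1) :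
    (G.compSubgraph c).Reach ⟨u, hu⟩ v := by
  revert hu
  induction hr using ReflTransGen.head_induction_on with
  | refl =>
    intro hu
    have : (⟨v.1, hu⟩ : (G.compSubgraph c).V) = v := Subtype.ext rfl
    rw [this]
    exact ReflTransGen.refl
  | @head a b hadj hrt ih =>
    intro hu
    have hb : G.comp b = c := (Quot.sound hadj).symm.trans hu
    refine ReflTransGen.head ?_ (ih hb)
    obtain ⟨g, hg⟩ := hadj
    rcases hg with ⟨h1, h2⟩ | ⟨h1, h2⟩
    · refine ⟨⟨g, by rw [h1]; exact hu⟩, Or.inl ⟨Subtype.ext h1, Subtype.ext h2⟩⟩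
    · refine ⟨⟨g, by rw [h1]; exact hb⟩, Or.inr ⟨Subtype.ext h1, Subtype.ext h2⟩⟩

lemma compSubgraph_tree (hGcut : ∀ e, G.IsCutEdge e) (c : G.Comp) :
    (G.compSubgraph c).IsTreeGraph := by
  constructor
  · constructor
    · obtain ⟨v, hv⟩ := Quot.exists_rep c
      exact ⟨⟨v, hv⟩⟩
    · intro u v
      have hr : G.Reach u.1 v.1 := by
        refine comp_eq_iff_reach.1 ?_
        rw [u.2, v.2]
      have := reach_lift_comp v u.2 hr
      have heq : (⟨u.1, u.2⟩ : (G.compSubgraph c).V) = u := Subtype.ext rfl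
      rwa [heq] at this
  · intro e
    refine ⟨(G.compSubgraph c).fst e, (G.compSubgraph c).snd e,
      ReflTransGen.single ⟨e, Or.inl ⟨rfl, rfl⟩⟩, ?_⟩
    intro hre
    have hmap : (G.deleteEdges {e.1}).Reach (G.fst e.1) (G.snd e.1) := by
      have := reach_map (G := (G.compSubgraph c).deleteEdges {e})
        (H := G.deleteEdges {e.1}) (f := fun x => x.1) ?_ hre
      · exact this
      · intro x y hadj
        obtain ⟨g, hg⟩ := hadj
        have hg1 : g.1.1 ≠ e.1 := by
          intro hh
          exact g.2 (show g.1 = e from Subtype.ext hh)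
        refine ReflTransGen.single ⟨⟨g.1.1, by simpa using hg1⟩, ?_⟩
        rcases hg with ⟨h1, h2⟩ | ⟨h1, h2⟩
        · exact Or.inl ⟨congrArg Subtype.val h1, congrArg Subtype.val h2⟩
        · exact Or.inr ⟨congrArg Subtype.val h1, congrArg Subtype.val h2⟩
    exact isCutEdge_not_reach (hGcut e.1) hmap

lemma comp_split
    (hsp : ∀ v, G.IsSprout v → ∃ e, G.IsDisEdge e ∧ (G.fst e = v ∨ G.snd e = v)) :
    Nat.card G.Comp = G.agreementCompCount + G.disEdgeCount := by
  classical
  letI : Fintype G.E := Fintype.ofFinite _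
  letI : Fintype G.Comp := Fintype.ofFinite _
  set DF : Finset G.E := Finset.univ.filter (fun e => G.IsDisEdge e) with hDF
  set CF : Finset G.Comp := Finset.univ.filter (fun c => G.CompHasSprout c) with hCF
  set NF : Finset G.Comp := Finset.univ.filter (fun c => ¬ G.CompHasSprout c) with hNF
  have hsplit : CF.card + NF.card = Fintype.card G.Comp :=
    Finset.card_filter_add_card_filter_not _
  have hagr : G.agreementCompCount = NF.card := by
    unfold agreementCompCount
    rw [show {c : G.Comp | ¬ G.CompHasSprout c} = (↑NF : Set G.Comp) by
      ext c; simp [hNF]]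
    exact Set.ncard_coe_finset _
  have hdis : G.disEdgeCount = DF.card := by
    unfold disEdgeCount
    rw [show {e : G.E | G.IsDisEdge e} = (↑DF : Set G.E) by ext e; simp [hDF]]
    exact Set.ncard_coe_finset _
  have himage : CF = DF.image (fun e => G.comp (G.fst e)) := by
    ext c
    simp only [hCF, hDF, Finset.mem_filter, Finset.mem_univ, true_and, Finset.mem_image]
    constructor
    · rintro ⟨v, hv, hs⟩
      obtain ⟨e, he, hend⟩ := hsp v hs
      refine ⟨e, he, ?_⟩
      rcases hend with h | h
      · rw [h]; exact hv
      · have : G.comp (G.fst e) = G.comp (G.snd e) := Quot.sound ⟨e, Or.inl ⟨rfl, rfl⟩⟩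
        rw [this, h]; exact hv
    · rintro ⟨e, he, rfl⟩
      exact ⟨G.fst e, rfl, he.1⟩
  have hinj : Set.InjOn (fun e => G.comp (G.fst e)) ↑DF := by
    intro e he e' he' heq
    simp only [hDF, Finset.coe_filter, Set.mem_setOf_eq, Finset.mem_univ, true_and] at he he'
    have hr : G.Reach (G.fst e) (G.fst e') := comp_eq_iff_reach.1 heq
    have hmem : G.fst e' = G.fst e ∨ G.fst e' = G.snd e := by
      have := disedge_reach he hr (Or.inl rfl)
      rcases this with h | h
      · exact Or.inl h
      · exact Or.inr h
    have hdeg : G.degree (G.fst e') = 1 := he'.1.2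
    rcases hmem with h | h
    · exact unique_incident hdeg (Or.inl h.symm) (Or.inl rfl)
    · exact unique_incident hdeg (Or.inr h.symm) (Or.inl rfl)
  have hcards : CF.card = DF.card := by
    rw [himage, Finset.card_image_of_injOn hinj]
  rw [Nat.card_eq_fintype_card, ← hsplit, hagr, hdis]
  omega

end Multigraph

namespace Multigraph

variable {G : Multigraph}

/-! #### Transport across `deleteDisEdges ∅` -/

def ιV (G : Multigraph) (v : G.V) : (G.deleteDisEdges ∅).V :=
  ⟨v, fun e he => absurd he (Set.notMem_empty e)⟩

def ιE (G : Multigraph) (e : G.E) : (G.deleteDisEdges ∅).E :=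
  ⟨e, Set.notMem_empty e, fun e' he' => absurd he' (Set.notMem_empty e')⟩

lemma ncard_dde (G : Multigraph) (P : G.E → Prop) :
    {e : (G.deleteDisEdges (∅ : Set G.E)).E | P e.1}.ncard = {e : G.E | P e}.ncard := by
  have himg : Subtype.val '' {e : (G.deleteDisEdges (∅ : Set G.E)).E | P e.1} = {e : G.E | P e} := by
    ext a
    constructor
    · rintro ⟨x, hx, rfl⟩; exact hx
    · intro ha; exact ⟨ιE G a, ha, rfl⟩
  rw [← himg, Set.ncard_image_of_injective _ Subtype.val_injective]
  rfl

lemma degree_dde (G : Multigraph) (w : (G.deleteDisEdges (∅ : Set G.E)).V) :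
    (G.deleteDisEdges ∅).degree w = G.degree w.1 := by
  unfold degree
  have h1 : {e : (G.deleteDisEdges (∅ : Set G.E)).E | (G.deleteDisEdges ∅).fst e = w} =
      {e : (G.deleteDisEdges (∅ : Set G.E)).E | G.fst e.1 = w.1} := by
    ext e; exact Subtype.ext_iff
  have h2 : {e : (G.deleteDisEdges (∅ : Set G.E)).E | (G.deleteDisEdges ∅).snd e = w} =
      {e : (G.deleteDisEdges (∅ : Set G.E)).E | G.snd e.1 = w.1} := by
    ext e; exact Subtype.ext_iff
  rw [h1, h2, ncard_dde G (fun e => G.fst e = w.1), ncard_dde G (fun e => G.snd e = w.1)]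

lemma isSprout_dde_iff (G : Multigraph) (w : (G.deleteDisEdges (∅ : Set G.E)).V) :
    (G.deleteDisEdges ∅).IsSprout w ↔ G.IsSprout w.1 := by
  unfold IsSprout
  rw [degree_dde]
  exact Iff.rfl

lemma isLabIso_dde_iff (G : Multigraph) (w : (G.deleteDisEdges (∅ : Set G.E)).V) :
    (G.deleteDisEdges ∅).IsLabelledIsolated w ↔ G.IsLabelledIsolated w.1 := by
  unfold IsLabelledIsolated
  rw [degree_dde]
  exact Iff.rfl

noncomputable def AgrEmb.ofDeleteEmpty {G N : Multigraph}
    (h : AgrEmb (G.deleteDisEdges ∅) N) : AgrEmb G N where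
  vMap v := h.vMap (ιV G v)
  path e := h.path (ιE G e)
  walk_ok e := h.walk_ok (ιE G e)
  path_ne e := h.path_ne _
  nodup e := h.nodup _
  edge_inj e e' d hd d' hd' hdd := by
    obtain ⟨h1, h2⟩ := h.edge_inj _ _ d hd d' hd' hdd
    exact ⟨congrArg Subtype.val h1, h2⟩
  interior_nodup e := h.interior_nodup _
  interior_disj e e' hne := h.interior_disj _ _ (fun hh => hne (congrArg Subtype.val hh))
  label_ok v i hl := h.label_ok (ιV G v) i hl
  covers f := by
    obtain ⟨e, d, hd, hdf⟩ := h.covers f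
    refine ⟨e.1, d, ?_, hdf⟩
    show d ∈ h.path (ιE G e.1)
    have : ιE G e.1 = e := Subtype.ext rfl
    rw [this]
    exact hd
  two_to_one u v huv heq := by
    have := h.two_to_one (ιV G u) (ιV G v) (fun hh => huv (congrArg Subtype.val hh)) heq
    rcases this with ⟨hs, hi⟩ | ⟨hs, hi⟩
    · exact Or.inl ⟨(isSprout_dde_iff G _).1 hs, (isLabIso_dde_iff G _).1 hi⟩
    · exact Or.inr ⟨(isSprout_dde_iff G _).1 hs, (isLabIso_dde_iff G _).1 hi⟩
  at_most_two u v w h1 h2 h3 hc :=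
    h.at_most_two (ιV G u) (ιV G v) (ιV G w)
      (fun hh => h1 (congrArg Subtype.val hh))
      (fun hh => h2 (congrArg Subtype.val hh))
      (fun hh => h3 (congrArg Subtype.val hh)) hc
  labels_unique x i hx := by
    obtain ⟨w, ⟨hw1, hw2⟩, hw3⟩ := h.labels_unique x i hx
    refine ⟨w.1, ⟨hw1, ?_⟩, ?_⟩
    · have : ιV G w.1 = w := Subtype.ext rfl
      show h.vMap (ιV G w.1) = x
      rw [this]
      exact hw2
    · rintro y ⟨hy1, hy2⟩
      exact congrArg Subtype.val (hw3 (ιV G y) ⟨hy1, hy2⟩)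
  interior_fresh e w hw v hv :=
    h.interior_fresh (ιE G e) w hw (ιV G v) (fun hs => hv ((isSprout_dde_iff G _).1 hs))

end Multigraph

namespace Multigraph

variable {G : Multigraph}

lemma isWalk_head {u v : G.V} {l : List G.Dart} (h : G.IsWalk u v l) (hne : l ≠ []) :
    G.dartSrc (l.head hne) = u := by
  cases l with
  | nil => exact absurd rfl hne
  | cons d ds => exact h.1

lemma length_interiorVerts (l : List G.Dart) :
    (G.interiorVerts l).length = l.length - 1 := by
  unfold interiorVerts
  rw [List.length_dropLast, List.length_map]

lemma master_count {G T : Multigraph} {n : ℕ} (h : AgrEmb G T) (hphylo : T.IsPhyloNet n)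
    (hsp : ∀ v, G.IsSprout v → ∃ e, G.IsDisEdge e ∧ (G.fst e = v ∨ G.snd e = v)) :
    Nat.card G.V + Nat.card T.E = Nat.card G.E + Nat.card T.V + 2 * G.disEdgeCount := by
  classical
  obtain ⟨hconn, hdeg, hlab, hproper⟩ := hphylo
  letI : Fintype G.V := Fintype.ofFinite _
  letI : Fintype G.E := Fintype.ofFinite _
  letI : Fintype T.V := Fintype.ofFinite _
  letI : Fintype T.E := Fintype.ofFinite _
  -- (A) nodup edge lists
  have pathNodupFst : ∀ e : G.E, ((h.path e).map Prod.fst).Nodup := fun e =>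
    List.Nodup.map_on (fun d hd d' hd' hdd => ((h.edge_inj e e d hd d' hd' hdd).2)) (h.nodup e)
  -- (B) edges of T are partitioned by the paths
  have huniv : Finset.univ.biUnion
      (fun e : G.E => ((h.path e).map Prod.fst).toFinset) = (Finset.univ : Finset T.E) := by
    refine Finset.eq_univ_iff_forall.2 ?_
    intro f
    obtain ⟨e, d, hd, hdf⟩ := h.covers f
    simp only [Finset.mem_biUnion, Finset.mem_univ, true_and, List.mem_toFinset, List.mem_map]
    exact ⟨e, d, hd, hdf⟩
  have hdisjE : ∀ e ∈ (Finset.univ : Finset G.E), ∀ e' ∈ (Finset.univ : Finset G.E), e ≠ e' →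
      Disjoint ((h.path e).map Prod.fst).toFinset ((h.path e').map Prod.fst).toFinset := by
    intro e _ e' _ hne
    rw [Finset.disjoint_left]
    intro f hf hf'
    simp only [List.mem_toFinset, List.mem_map] at hf hf'
    obtain ⟨d, hd, hdf⟩ := hf
    obtain ⟨d', hd', hdf'⟩ := hf'
    exact hne (h.edge_inj e e' d hd d' hd' (hdf.trans hdf'.symm)).1
  have hTEcard : Fintype.card T.E = ∑ e : G.E, (h.path e).length := by
    rw [← Finset.card_univ, ← huniv, Finset.card_biUnion hdisjE]
    refine Finset.sum_congr rfl ?_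
    intro e _
    rw [List.toFinset_card_of_nodup (pathNodupFst e), List.length_map]
  -- (C) interior vertices
  set IntF : Finset T.V :=
    Finset.univ.biUnion (fun e : G.E => (T.interiorVerts (h.path e)).toFinset) with hIntF
  have hIntcard : IntF.card = ∑ e : G.E, ((h.path e).length - 1) := by
    rw [hIntF, Finset.card_biUnion ?_]
    · refine Finset.sum_congr rfl fun e _ => ?_
      rw [List.toFinset_card_of_nodup (h.interior_nodup e), length_interiorVerts]
    · intro e _ e' _ hne
      rw [Function.onFun, Finset.disjoint_left]
      intro w hw hw'
      simp only [List.mem_toFinset] at hw hw'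
      exact h.interior_disj e e' hne w hw hw'
  have hIntsum : IntF.card + Fintype.card G.E = Fintype.card T.E := by
    rw [hIntcard, hTEcard]
    have hsum1 : (∑ _e : G.E, (1 : ℕ)) = Fintype.card G.E := by simp
    rw [← hsum1, ← Finset.sum_add_distrib]
    refine Finset.sum_congr rfl fun e _ => ?_
    have := List.length_pos_iff.2 (h.path_ne e)
    omega
  -- (D) non-sprout vertices inject into T.V, avoiding interiors
  set RF : Finset G.V := Finset.univ.filter (fun v => ¬ G.IsSprout v) with hRF
  have hinjR : Set.InjOn h.vMap ↑RF := by
    intro u hu v hv heq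
    by_contra hne
    rw [Finset.mem_coe, hRF, Finset.mem_filter] at hu hv
    rcases h.two_to_one u v hne heq with ⟨hs, _⟩ | ⟨hs, _⟩
    · exact hu.2 hs
    · exact hv.2 hs
  have hfresh : ∀ v : G.V, ¬ G.IsSprout v → ∀ x ∈ IntF, h.vMap v ≠ x := by
    intro v hv x hx
    simp only [hIntF, Finset.mem_biUnion, List.mem_toFinset, Finset.mem_univ, true_and] at hx
    obtain ⟨e, hxe⟩ := hx
    exact h.interior_fresh e x hxe v hv
  -- (E) key coverage claim
  have hcover : ∀ x : T.V, (∀ e : G.E, x ∉ T.interiorVerts (h.path e)) →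
      ∃ v, ¬ G.IsSprout v ∧ h.vMap v = x := by
    intro x hxI
    by_contra hno
    push_neg at hno
    have hallsprout : ∀ v, h.vMap v = x → G.IsSprout v := by
      intro v hv
      by_contra hs
      exact hno v hs hv
    have claim1 : ∀ f : T.E, T.fst f = x ∨ T.snd f = x →
        ∃ (e : G.E) (hne : h.path e ≠ []),
          (f = ((h.path e).head hne).1 ∧ h.vMap (G.fst e) = x) ∨
          (f = ((h.path e).getLast hne).1 ∧ h.vMap (G.snd e) = x) := by
      intro f hf
      obtain ⟨e, d, hd, hdf⟩ := h.covers f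
      have hne := h.path_ne e
      refine ⟨e, hne, ?_⟩
      have hx : T.dartSrc d = x ∨ T.dartTgt d = x := by
        subst hdf
        obtain ⟨g, b⟩ := d
        cases b
        · rcases hf with hf | hf
          · exact Or.inr hf
          · exact Or.inl hf
        · rcases hf with hf | hf
          · exact Or.inl hf
          · exact Or.inr hf
      rcases hx with hx | hx
      · left
        rcases eq_or_ne d ((h.path e).head hne) with rfl | hdh
        · exact ⟨hdf.symm, by rw [← isWalk_head (h.walk_ok e) hne]; exact hx⟩
        · exfalso
          obtain ⟨d₀, ds, hpath⟩ : ∃ d₀ ds, h.path e = d₀ :: ds := by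
            cases hp : h.path e with
            | nil => exact absurd hp hne
            | cons a l => exact ⟨a, l, rfl⟩
          have hd2 : d ∈ h.path e := hd
          rw [hpath] at hd2
          have hd' : d ∈ ds := by
            rcases List.mem_cons.1 hd2 with rfl | hmem
            · exact absurd (by simp [hpath]) hdh
            · exact hmem
          have hw := h.walk_ok e
          rw [hpath] at hw
          have hmem := src_mem_interior hw d hd'
          rw [← hpath] at hmem
          exact hxI e (hx ▸ hmem)
      · right
        rcases eq_or_ne d ((h.path e).getLast hne) with rfl | hdl
        · exact ⟨hdf.symm, by rw [← isWalk_getLast (h.walk_ok e) hne]; exact hx⟩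
        · exact absurd (hx ▸ tgt_mem_interior (h.walk_ok e) hne d hd hdl) (hxI e)
    -- x has an incident edge
    have hdx := hdeg x
    have hxf : ∃ f : T.E, T.fst f = x ∨ T.snd f = x := by
      by_contra hnof
      push_neg at hnof
      have h1 : {f : T.E | T.fst f = x} = ∅ := by
        ext f
        simp only [Set.mem_setOf_eq, Set.mem_empty_iff_false, iff_false]
        exact fun hh => (hnof f).1 hh
      have h2 : {f : T.E | T.snd f = x} = ∅ := by
        ext f
        simp only [Set.mem_setOf_eq, Set.mem_empty_iff_false, iff_false]
        exact fun hh => (hnof f).2 hh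
      have h0 : T.degree x = 0 := by
        unfold degree
        rw [h1, h2]
        simp
      omega
    obtain ⟨f1, hf1⟩ := hxf
    obtain ⟨e₁, hne₁, hcase⟩ := claim1 f1 hf1
    obtain ⟨s, hsend, hsx⟩ : ∃ s, (G.fst e₁ = s ∨ G.snd e₁ = s) ∧ h.vMap s = x := by
      rcases hcase with ⟨_, hvx⟩ | ⟨_, hvx⟩
      · exact ⟨G.fst e₁, Or.inl rfl, hvx⟩
      · exact ⟨G.snd e₁, Or.inr rfl, hvx⟩
    have hs : G.IsSprout s := hallsprout s hsx
    have hsdeg : G.degree s = 1 := hs.2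
    have hfiber : ∀ u, h.vMap u = x → u = s := by
      intro u hu
      by_contra hus
      rcases h.two_to_one u s hus (hu.trans hsx.symm) with ⟨_, hiso⟩ | ⟨_, hiso⟩
      · have h0 := hiso.2
        omega
      · have hu1 := (hallsprout u hu).2
        have h0 := hiso.2
        omega
    have claim2 : ∀ f : T.E, T.fst f = x ∨ T.snd f = x →
        f = ((h.path e₁).head hne₁).1 ∨ f = ((h.path e₁).getLast hne₁).1 := by
      intro f hf
      obtain ⟨e, hne, hc⟩ := claim1 f hf
      have hee : e = e₁ := by
        have hinc : G.fst e = s ∨ G.snd e = s := by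
          rcases hc with ⟨_, hvx⟩ | ⟨_, hvx⟩
          · exact Or.inl (hfiber _ hvx)
          · exact Or.inr (hfiber _ hvx)
        exact unique_incident hsdeg hinc hsend
      subst hee
      rcases hc with ⟨h1, _⟩ | ⟨h1, _⟩
      · exact Or.inl h1
      · exact Or.inr h1
    obtain ⟨d₀, ds, hpath⟩ : ∃ d₀ ds, h.path e₁ = d₀ :: ds := by
      cases hp : h.path e₁ with
      | nil => exact absurd hp hne₁
      | cons a l => exact ⟨a, l, rfl⟩
    have hhead : (h.path e₁).head hne₁ = d₀ := by simp [hpath]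
    have hw₁ := h.walk_ok e₁
    rw [hpath] at hw₁
    have hnodup₁ := h.nodup e₁
    rw [hpath, List.nodup_cons] at hnodup₁
    have hnoloop : ∀ f : T.E, T.fst f = x → T.snd f = x → False := by
      intro f hfa hfb
      have hboth : ∀ d : T.Dart, d.1 = f → T.dartSrc d = x ∧ T.dartTgt d = x := by
        rintro ⟨g, b⟩ hg
        cases hg
        cases b
        · exact ⟨hfb, hfa⟩
        · exact ⟨hfa, hfb⟩
      have hds : ds = [] := by
        by_contra hds
        have hlast : (h.path e₁).getLast hne₁ ∈ ds := by
          have hgl : (h.path e₁).getLast hne₁ = ds.getLast hds := by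
            simp [hpath, List.getLast_cons hds]
          rw [hgl]
          exact List.getLast_mem hds
        rcases claim2 f (Or.inl hfa) with hfh | hfl
        · have hb := hboth _ hfh.symm
          have hneq : (h.path e₁).head hne₁ ≠ (h.path e₁).getLast hne₁ := by
            intro hcon
            apply hnodup₁.1
            rw [← hhead, hcon]
            exact hlast
          have hmem := tgt_mem_interior (h.walk_ok e₁) hne₁ _ (List.head_mem hne₁) hneq
          exact hxI e₁ (hb.2 ▸ hmem)
        · have hb := hboth _ hfl.symm
          have hmem := src_mem_interior hw₁ _ hlast
          rw [← hpath] at hmem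
          exact hxI e₁ (hb.1 ▸ hmem)
      -- now the path is a single dart, a loop at x, forcing a loop at s
      subst hds
      have hb : T.dartSrc d₀ = x ∧ T.dartTgt d₀ = x := by
        rcases claim2 f (Or.inl hfa) with hfh | hfl
        · refine hboth d₀ ?_
          rw [← hhead]; exact hfh.symm
        · refine hboth d₀ ?_
          have : (h.path e₁).getLast hne₁ = d₀ := by simp [hpath]
          rw [← this]; exact hfl.symm
      have h1 : h.vMap (G.fst e₁) = x := by rw [← hw₁.1]; exact hb.1
      have h2 : h.vMap (G.snd e₁) = x := by
        have : T.dartTgt d₀ = h.vMap (G.snd e₁) := hw₁.2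
        rw [← this]; exact hb.2
      exact no_loop_of_degree_one hsdeg (hfiber _ h1) (hfiber _ h2)
    -- degree bound
    have hsub : {f : T.E | T.fst f = x} ∪ {f : T.E | T.snd f = x} ⊆
        {((h.path e₁).head hne₁).1, ((h.path e₁).getLast hne₁).1} := by
      rintro f (hf | hf)
      · simpa using claim2 f (Or.inl hf)
      · simpa using claim2 f (Or.inr hf)
    have hAB : {f : T.E | T.fst f = x} ∩ {f : T.E | T.snd f = x} = ∅ := by
      ext f
      simp only [Set.mem_inter_iff, Set.mem_setOf_eq, Set.mem_empty_iff_false, iff_false, not_and]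
      exact fun h1 h2 => hnoloop f h1 h2
    have hdle : T.degree x ≤ 2 := by
      have h1 := Set.ncard_union_add_ncard_inter {f : T.E | T.fst f = x} {f : T.E | T.snd f = x}
        (Set.toFinite _) (Set.toFinite _)
      have h2 : ({f : T.E | T.fst f = x} ∪ {f : T.E | T.snd f = x}).ncard ≤ 2 := by
        refine le_trans (Set.ncard_le_ncard hsub (Set.toFinite _)) ?_
        exact le_trans (Set.ncard_insert_le _ _) (by simp)
      have h3 : ({f : T.E | T.fst f = x} ∩ {f : T.E | T.snd f = x}).ncard = 0 := by
        rw [hAB]; simp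
      unfold degree
      omega
    have hdeg1 : T.degree x = 1 := by
      rcases hdx with h' | h'
      · exact h'
      · omega
    have hlabx : (T.label x).isSome := (hlab.1 x).2 hdeg1
    obtain ⟨i, hi⟩ := Option.isSome_iff_exists.1 hlabx
    obtain ⟨v, ⟨hv1, hv2⟩, _⟩ := h.labels_unique x i hi
    have hvs := hallsprout v hv2
    rw [hvs.1] at hv1
    exact Option.some_ne_none i hv1.symm
  -- (F) partition of T.V
  have hdisjRI : Disjoint (RF.image h.vMap) IntF := by
    rw [Finset.disjoint_left]
    intro x hx hx'
    obtain ⟨v, hv, hvx⟩ := Finset.mem_image.1 hx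
    rw [hRF, Finset.mem_filter] at hv
    exact hfresh v hv.2 x hx' hvx
  have hbigunion : (Finset.univ : Finset T.V) = RF.image h.vMap ∪ IntF := by
    ext x
    simp only [Finset.mem_univ, true_iff, Finset.mem_union]
    by_cases hxI : x ∈ IntF
    · exact Or.inr hxI
    · left
      have hxIl : ∀ e : G.E, x ∉ T.interiorVerts (h.path e) := by
        intro e hx
        apply hxI
        simp only [hIntF, Finset.mem_biUnion, Finset.mem_univ, true_and, List.mem_toFinset]
        exact ⟨e, hx⟩
      obtain ⟨v, hv, hvx⟩ := hcover x hxIl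
      exact Finset.mem_image.2 ⟨v, by rw [hRF, Finset.mem_filter]; exact ⟨Finset.mem_univ _, hv⟩, hvx⟩
  have hTVcard : Fintype.card T.V = RF.card + IntF.card := by
    rw [← Finset.card_univ, hbigunion, Finset.card_union_of_disjoint hdisjRI,
      Finset.card_image_of_injOn hinjR]
  -- (G) sprout count
  set SF : Finset G.V := Finset.univ.filter (fun v => G.IsSprout v) with hSF
  set DF : Finset G.E := Finset.univ.filter (fun e => G.IsDisEdge e) with hDF
  have hSF_eq : SF = DF.biUnion (fun e => {G.fst e, G.snd e}) := by
    ext v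
    simp only [hSF, hDF, Finset.mem_filter, Finset.mem_univ, true_and, Finset.mem_biUnion,
      Finset.mem_insert, Finset.mem_singleton]
    constructor
    · intro hv
      obtain ⟨e, he, hend⟩ := hsp v hv
      refine ⟨e, he, ?_⟩
      rcases hend with h' | h'
      · exact Or.inl h'.symm
      · exact Or.inr h'.symm
    · rintro ⟨e, he, h' | h'⟩
      · rw [h']; exact he.1
      · rw [h']; exact he.2
  have hSFcard : SF.card = 2 * DF.card := by
    rw [hSF_eq, Finset.card_biUnion ?_]
    · have : ∀ e ∈ DF, ({G.fst e, G.snd e} : Finset G.V).card = 2 := by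
        intro e he
        rw [hDF, Finset.mem_filter] at he
        refine Finset.card_pair ?_
        intro hh
        exact no_loop_of_degree_one he.2.1.2 rfl hh.symm
      rw [Finset.sum_congr rfl this, Finset.sum_const, smul_eq_mul, mul_comm]
    · intro e he e' he' hne
      simp only [Finset.mem_coe, hDF, Finset.mem_filter] at he he'
      rw [Function.onFun, Finset.disjoint_left]
      intro w hw hw'
      simp only [Finset.mem_insert, Finset.mem_singleton] at hw hw'
      have hwdeg : G.degree w = 1 := by
        rcases hw with h' | h'
        · rw [h']; exact he.2.1.2
        · rw [h']; exact he.2.2.2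
      apply hne
      refine unique_incident hwdeg ?_ ?_
      · rcases hw with h' | h'
        · exact Or.inl h'.symm
        · exact Or.inr h'.symm
      · rcases hw' with h' | h'
        · exact Or.inl h'.symm
        · exact Or.inr h'.symm
  have hGVcard : SF.card + RF.card = Fintype.card G.V := by
    rw [hSF, hRF, Finset.card_filter_add_card_filter_not, Finset.card_univ]
  have hdisC : G.disEdgeCount = DF.card := by
    unfold disEdgeCount
    rw [show {e : G.E | G.IsDisEdge e} = (↑DF : Set G.E) by ext e; simp [hDF]]
    exact Set.ncard_coe_finset _
  rw [Nat.card_eq_fintype_card, Nat.card_eq_fintype_card, Nat.card_eq_fintype_card,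
    Nat.card_eq_fintype_card, hdisC]
  omega

end Multigraph

/-- A maximum agreement graph of two unrooted binary phylogenetic trees with `k`
disagreement edges has exactly `k + 1` agreement subgraphs, each of which is a
tree. -/
theorem mag_of_trees_is_forest (n : ℕ) (T T' G : Multigraph)
    (hT : T.IsPhyloTree n) (hT' : T'.IsPhyloTree n) (hG : G.IsMAG T T') :
    G.agreementCompCount = G.disEdgeCount + 1 ∧
    ∀ c : G.Comp, ¬ G.CompHasSprout c → (G.compSubgraph c).IsTreeGraph := by
  classical
  obtain ⟨⟨hsp, A, A', hA, hA', hAcard, hA'card, hembA, hembA'⟩, -⟩ := hG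
  -- the tier of a tree is zero, so `A` is empty
  have eulerT' := Multigraph.euler T' hT'.2.2
  have hcompT' := Multigraph.connected_card_comp hT'.2.1
  have htier' : T'.tier = 0 := by
    unfold Multigraph.tier
    omega
  have hAcard0 : A.ncard = 0 := by
    rw [hAcard, htier']
    omega
  have hAempty : A = ∅ := (Set.ncard_eq_zero (Set.toFinite A)).1 hAcard0
  rw [hAempty] at hembA
  obtain ⟨h0⟩ := hembA
  have h : Multigraph.AgrEmb G T := Multigraph.AgrEmb.ofDeleteEmpty h0
  have hTcut := hT.2.2
  have hGcut : ∀ e, G.IsCutEdge e := Multigraph.allCut_of_agrEmb h hTcut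
  have eulerG := Multigraph.euler G hGcut
  have eulerT := Multigraph.euler T hTcut
  have hcompT := Multigraph.connected_card_comp hT.2.1
  have hmaster := Multigraph.master_count h hT.1 hsp
  have hsplit := Multigraph.comp_split (G := G) hsp
  exact ⟨by omega, fun c _ => Multigraph.compSubgraph_tree hGcut c⟩
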